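/- arXiv:1311.1064 — 7 statements merged into one kernel-verified Lean document; each statement's English description precedes it below -/
import Mathlib

section
/- In a left noetherian ring, every set of nonzero pairwise orthogonal idempotents is finite. -/
theorem stmt_0 (R : Type*) [Ring R] [IsNoetherianRing R] (S : Set R)
    (hidem : ∀ e ∈ S, e * e = e)
    (horth : ∀ e ∈ S, ∀ f ∈ S, e ≠ f → e * f = 0)
    (hnz : ∀ e ∈ S, e ≠ 0) : S.Finite := by
  by_contra hinf
  rw [← Set.not_infinite, not_not] at hinf
  set g := hinf.natEmbedding with hg
  -- the chain of spans of initial segments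
  set I : ℕ → Submodule R R := fun n => Submodule.span R ((fun k => (g k : R)) '' {k | k < n})
    with hI
  have hmono : Monotone I := fun a b hab =>
    Submodule.span_mono (Set.image_mono fun k hk => lt_of_lt_of_le hk hab)
  obtain ⟨n, hn⟩ := monotone_stabilizes_iff_noetherian.mpr inferInstance ⟨I, hmono⟩
  have hmem : (g n : R) ∈ I (n + 1) := Submodule.subset_span ⟨n, Nat.lt_succ_self n, rfl⟩
  have hIe : I n = I (n+1) := hn (n + 1) (Nat.le_succ n)
  rw [← hIe] at hmem
  -- everything in I n is killed by right multiplication by g n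
  have hker : I n ≤ LinearMap.ker (LinearMap.mulRight R (g n : R)) := by
    rw [hI, Submodule.span_le]
    rintro x ⟨k, hk, rfl⟩
    simp only [SetLike.mem_coe, LinearMap.mem_ker, LinearMap.mulRight_apply]
    refine horth _ (g k).2 _ (g n).2 fun h => ?_
    have : k = n := g.injective (Subtype.ext h)
    exact Nat.lt_irrefl n (this ▸ hk)
  have := hker hmem
  simp only [LinearMap.mem_ker, LinearMap.mulRight_apply] at this
  rw [hidem _ (g n).2] at this
  exact hnz _ (g n).2 this
end

section
/- A unital ring is semisimple if and only if it is left hereditary and left self-injective. -/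
/-!
Semisimple rings have all their modules projective and injective; the content is the converse.
Over a left self-injective ring `R` every linear map from a left ideal to `R` is a right
multiplication, so a projective left ideal `V` has a dual basis `(α, (· * a α))`, and
`e = ∑ a α * α`, summed over the supports of the coordinates of `x₁, …, xₖ ∈ V`, satisfies
`xᵢ * e = xᵢ`. Hence a finitely generated left ideal `I` contains such an `e`, so `I = R e` is a
direct summand, and it remains to show that every left ideal is finitely generated.

Otherwise there is an infinite independent family of nonzero cyclic left ideals `R xₙ`.
Self-injectivity provides, for each `T ⊆ ℕ`, an element `c T` acting on the `xₙ` as the indicator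
of `T` and killing a left ideal `B` maximal with `B ∩ ⨁ R xₙ = 0`; as hereditary rings are
nonsingular and `B ⊕ ⨁ R xₙ` is essential, `c T * c T' = c T` whenever `T ⊆ T'`. Let `V` be the
left ideal generated by the `c T` with `T` outside a nonprincipal ultrafilter. For `n ∈ T` the
coordinates of `xₙ` are supported inside those of `c T`, and an ultrafilter argument puts all
these supports in one finite set, giving `e ∈ V` with `xₙ * e = xₙ` for all `n`. But every
element of `V` is fixed by some `c T` with `T` outside the ultrafilter, and then
`xₙ = xₙ * e * c T = 0` for `n ∉ T`.
-/

open Set Submodule Filter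

def IsEssential {α : Type*} [Lattice α] [OrderBot α] (a : α) : Prop :=
  ∀ c, Disjoint a c → c = ⊥

theorem IsEssential.mono {α : Type*} [Lattice α] [OrderBot α] {a b : α} (ha : IsEssential a)
    (hab : a ≤ b) : IsEssential b :=
  fun c hc => ha c (hc.mono_left hab)

section Lattice

variable {α : Type*} [CompleteLattice α] [IsModularLattice α] [IsCompactlyGenerated α]

theorem exists_disjoint_isEssential_sup (a : α) : ∃ b, Disjoint a b ∧ IsEssential (a ⊔ b) := by
  obtain ⟨b, -, hb⟩ := zorn_le_nonempty₀ {b | Disjoint a b}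
    (fun s hs hchain _ _ => ⟨sSup s, hchain.directedOn.disjoint_sSup_right.2 fun _ h => hs h,
      fun _ => le_sSup⟩) ⊥ disjoint_bot_right
  refine ⟨b, hb.prop, fun c hc => ?_⟩
  have hcb : c ≤ b := le_sup_right.trans
    (hb.2 (hb.prop.disjoint_sup_right_of_disjoint_sup_left hc) le_sup_left)
  exact hc.eq_bot_of_ge (hcb.trans le_sup_right)

theorem iSupIndep_of_disjoint_biSup_lt {t : ℕ → α} (h : ∀ n, Disjoint (t n) (⨆ k < n, t k)) :
    iSupIndep t := by
  classical
  refine iSupIndep_iff_supIndep.2 fun s => Finset.induction_on_max s (Finset.supIndep_empty t) ?_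
  exact fun n s hlt ih =>
    ih.insert <| (h n).mono_right <| Finset.sup_le fun k hk => le_biSup t (hlt k hk)

end Lattice

theorem Ultrafilter.exists_infinite_subset_notMem {X : Type*} (U : Ultrafilter X) {S : Set X}
    (hS : S.Infinite) : ∃ T ⊆ S, T.Infinite ∧ T ∉ U := by
  let e := hS.natEmbedding
  have he : Function.Injective fun k => (e k : X) := Subtype.val_injective.comp e.injective
  have hsub (f : ℕ → ℕ) : range (fun k => (e (f k) : X)) ⊆ S := by
    rintro _ ⟨k, rfl⟩; exact (e (f k)).2
  have hinf (f : ℕ → ℕ) (hf : f.Injective) : (range fun k => (e (f k) : X)).Infinite :=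
    infinite_range_of_injective (he.comp hf)
  -- the ranges of an enumeration of `S` along the even and the odd numbers cannot both lie in `U`
  by_contra! hU
  have heven := hU _ (hsub (2 * ·)) (hinf _ fun a b h => by simpa using h)
  have hodd := hU _ (hsub (2 * · + 1)) (hinf _ fun a b h => by simpa using h)
  refine U.empty_notMem (U.mem_of_superset (U.inter_mem heven hodd) ?_)
  rintro _ ⟨⟨a, rfl⟩, ⟨b, hb⟩⟩
  have := he hb
  omega

theorem Ultrafilter.finite_iUnion_of_finite_biUnion {X : Type*} (U : Ultrafilter ℕ)
    {φ : ℕ → Set X} (hφ : ∀ n, (φ n).Finite) (h : ∀ T ∉ U, (⋃ n ∈ T, φ n).Finite) :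
    (⋃ n, φ n).Finite := by
  set S := {n | (disjointed φ n).Nonempty}
  by_cases hS : S.Finite
  · refine (hS.biUnion fun n _ => hφ n).subset ?_
    rw [← iUnion_disjointed]
    exact iUnion_subset fun n y hy => mem_biUnion (x := n) ⟨y, hy⟩ (disjointed_subset φ n hy)
  obtain ⟨T, hTS, hT, hTU⟩ := U.exists_infinite_subset_notMem hS
  refine absurd (h T hTU) (Infinite.mono (biUnion_mono subset_rfl fun n _ => disjointed_subset φ n)
    (hT.biUnion fun m hm n _ hmn => ?_))
  by_contra hne
  have hdisj : Disjoint (disjointed φ m) (disjointed φ n) := disjoint_disjointed φ hne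
  rw [← hmn] at hdisj
  exact (hTS hm).ne_empty (disjoint_self.mp hdisj)

section Ring

variable {R : Type*} [Ring R]

theorem eq_zero_of_isEssential_ker_toSpanSingleton {M : Type*} [AddCommGroup M] [Module R M]
    {x : M} [Module.Projective R (R ∙ x)]
    (hx : IsEssential (LinearMap.ker (LinearMap.toSpanSingleton R M x))) : x = 0 := by
  let x' : R ∙ x := ⟨x, mem_span_singleton_self x⟩
  let π := LinearMap.toSpanSingleton R (R ∙ x) x'
  have hπ : Function.Surjective π := by
    rintro ⟨y, hy⟩
    obtain ⟨r, rfl⟩ := mem_span_singleton.mp hy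
    exact ⟨r, rfl⟩
  obtain ⟨σ, hσ⟩ := Module.projective_lifting_property π LinearMap.id hπ
  have hker : LinearMap.ker (LinearMap.toSpanSingleton R M x) = LinearMap.ker π := by
    ext r
    simp [π, x', Subtype.ext_iff]
  have hσ0 : σ = 0 := LinearMap.range_eq_bot.mp <| hx _ <| by
    rw [hker, disjoint_def]
    rintro _ h ⟨y, rfl⟩
    rw [LinearMap.mem_ker, ← LinearMap.comp_apply, hσ, LinearMap.id_apply] at h
    simp [h]
  have : x' = 0 := by
    rw [← LinearMap.id_apply (R := R) x', ← hσ, hσ0, LinearMap.comp_zero, LinearMap.zero_apply]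
  simpa [x'] using congrArg Subtype.val this

theorem exists_forall_mul_eq_of_injective [Module.Injective R R] {P : Type*} [AddCommGroup P]
    [Module R P] (f : P →ₗ[R] R) (hf : Function.Injective f) (g : P →ₗ[R] R) :
    ∃ a : R, ∀ p, f p * a = g p := by
  obtain ⟨h, hh⟩ := Module.Injective.extension_property R R P R f hf g
  refine ⟨h 1, fun p => ?_⟩
  rw [← hh, LinearMap.comp_apply, ← smul_eq_mul, ← LinearMap.map_smul, smul_eq_mul, mul_one]

theorem exists_mul_eq_self_and_mul_eq_zero [Module.Injective R R] {I J : Ideal R}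
    (hIJ : Disjoint I J) : ∃ c : R, (∀ x ∈ I, x * c = x) ∧ ∀ x ∈ J, x * c = 0 := by
  have hinj : Function.Injective (I.subtype.coprod J.subtype) := by
    rw [← LinearMap.ker_eq_bot, LinearMap.ker_coprod_of_disjoint_range _ _ (by simpa using hIJ)]
    simp
  obtain ⟨c, hc⟩ := exists_forall_mul_eq_of_injective _ hinj (I.subtype ∘ₗ LinearMap.fst R I J)
  exact ⟨c, fun x hx => by simpa using hc (⟨x, hx⟩, 0), fun x hx => by simpa using hc (0, ⟨x, hx⟩)⟩

structure RightMulDualBasis (V : Ideal R) where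
  coord : V →ₗ[R] V →₀ R
  factor : V → R
  linearCombination_coord (x : V) : Finsupp.linearCombination R id (coord x) = x
  coord_apply (x α : V) : coord x α = x * factor α

namespace RightMulDualBasis

theorem nonempty [Module.Injective R R] (V : Ideal R) [Module.Projective R V] :
    Nonempty (RightMulDualBasis V) := by
  obtain ⟨s, hs⟩ := Module.Projective.out (R := R) (P := V)
  choose a ha using fun α => exists_forall_mul_eq_of_injective V.subtype
    Subtype.val_injective (Finsupp.lapply α ∘ₗ s)
  exact ⟨⟨s, a, hs, fun x α => (ha α x).symm⟩⟩

variable {V : Ideal R} (b : RightMulDualBasis V)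

def unit (F : Finset V) : R := ∑ α ∈ F, b.factor α * α

theorem unit_mem (F : Finset V) : b.unit F ∈ V :=
  V.sum_mem fun α _ => V.mul_mem_left _ α.2

theorem mul_unit {x : V} {F : Finset V} (hF : (b.coord x).support ⊆ F) : x * b.unit F = x := by
  have hx := congrArg Subtype.val (b.linearCombination_coord x)
  rw [Finsupp.linearCombination_apply, Finsupp.sum_of_support_subset _ hF _ (by simp)] at hx
  calc (x : R) * b.unit F = ∑ α ∈ F, b.coord x α * α := by
        simp [unit, Finset.mul_sum, b.coord_apply, mul_assoc]
    _ = x := by simpa using hx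

theorem support_coord_subset {x y : V} (hxy : (x : R) * y = x) :
    (b.coord x).support ⊆ (b.coord y).support := by
  intro α
  simp only [Finsupp.mem_support_iff, b.coord_apply]
  rw [← hxy, mul_assoc]
  exact fun h h' => h (by rw [h', mul_zero])

end RightMulDualBasis

theorem Ideal.FG.exists_mem_forall_mul_eq_self [Module.Injective R R] {I : Ideal R}
    [Module.Projective R I] (hI : I.FG) : ∃ e ∈ I, ∀ x ∈ I, x * e = x := by
  classical
  obtain ⟨b⟩ := RightMulDualBasis.nonempty I
  obtain ⟨G, rfl⟩ := hI
  let gen (g : G) : Ideal.span (G : Set R) := ⟨g, Ideal.subset_span g.2⟩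
  refine ⟨b.unit (G.attach.biUnion fun g => (b.coord (gen g)).support), b.unit_mem _, ?_⟩
  intro x hx
  refine LinearMap.eqOn_span' (f := LinearMap.toSpanSingleton R R _) (g := LinearMap.id) ?_ hx
  intro g hg
  exact b.mul_unit <|
    Finset.subset_biUnion_of_mem (fun g => (b.coord (gen g)).support) (Finset.mem_attach G ⟨g, hg⟩)

theorem exists_mul_eq_indicator [Module.Injective R R] {x : ℕ → R}
    (hind : iSupIndep fun n => R ∙ x n) {B : Ideal R} (hB : Disjoint (⨆ n, R ∙ x n) B)
    (T : Set ℕ) :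
    ∃ c : R, (∀ n ∈ T, x n * c = x n) ∧ (∀ n ∉ T, x n * c = 0) ∧ ∀ y ∈ B, y * c = 0 := by
  have hmem {S : Set ℕ} {n : ℕ} (hn : n ∈ S) : x n ∈ ⨆ k ∈ S, R ∙ x k :=
    le_biSup (fun k => R ∙ x k) hn (mem_span_singleton_self _)
  have hdisj : Disjoint (⨆ n ∈ T, R ∙ x n) ((⨆ n ∈ Tᶜ, R ∙ x n) ⊔ B) :=
    (hind.disjoint_biSup_biSup disjoint_compl_right).disjoint_sup_right_of_disjoint_sup_left <|
      hB.mono_left <| sup_le (iSup₂_le fun n _ => le_iSup (fun k => R ∙ x k) n)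
        (iSup₂_le fun n _ => le_iSup (fun k => R ∙ x k) n)
  obtain ⟨c, hc₁, hc₂⟩ := exists_mul_eq_self_and_mul_eq_zero hdisj
  exact ⟨c, fun n hn => hc₁ _ (hmem hn), fun n hn => hc₂ _ (mem_sup_left (hmem hn)),
    fun y hy => hc₂ _ (mem_sup_right hy)⟩

theorem exists_notMem_mul_eq_self {ι : Type*} {U : Ultrafilter ι} {c : Set ι → R}
    (hc : ∀ T T', T ⊆ T' → c T * c T' = c T) {v : R} (hv : v ∈ span R (c '' {T | T ∉ U})) :
    ∃ T ∉ U, v * c T = v := by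
  induction hv using Submodule.span_induction with
  | mem v hv =>
    obtain ⟨T, hT, rfl⟩ := hv
    exact ⟨T, hT, hc T T subset_rfl⟩
  | zero => exact ⟨∅, U.empty_notMem, zero_mul _⟩
  | add v w _ _ hv hw =>
    obtain ⟨T, hT, hvT⟩ := hv
    obtain ⟨T', hT', hwT'⟩ := hw
    refine ⟨T ∪ T', by simp [Ultrafilter.union_mem_iff, hT, hT'], ?_⟩
    calc (v + w) * c (T ∪ T') = v * c T * c (T ∪ T') + w * c T' * c (T ∪ T') := by
          rw [hvT, hwT', add_mul]
      _ = v + w := by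
          rw [mul_assoc, hc _ _ subset_union_left, hvT, mul_assoc, hc _ _ subset_union_right, hwT']
  | smul r v _ hv =>
    obtain ⟨T, hT, hvT⟩ := hv
    exact ⟨T, hT, by rw [smul_eq_mul, mul_assoc, hvT]⟩

theorem exists_eq_zero_of_mul_eq_indicator [Module.Injective R R] {x : ℕ → R} {c : Set ℕ → R}
    (hc_mem : ∀ T, ∀ n ∈ T, x n * c T = x n) (hc_notMem : ∀ T, ∀ n ∉ T, x n * c T = 0)
    (hc_mul : ∀ T T', T ⊆ T' → c T * c T' = c T)
    [Module.Projective R (span R (c '' {T | T ∉ hyperfilter ℕ}))] : ∃ n, x n = 0 := by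
  set U := hyperfilter ℕ
  set V : Ideal R := span R (c '' {T | T ∉ U})
  obtain ⟨b⟩ := RightMulDualBasis.nonempty V
  have hcV (T : Set ℕ) (hT : T ∉ U) : c T ∈ V := subset_span ⟨T, hT, rfl⟩
  have hxV (n : ℕ) : x n ∈ V := by
    rw [← hc_mem {n} n rfl]
    exact V.mul_mem_left _ (hcV _ (finite_singleton n).notMem_hyperfilter)
  let x' (n : ℕ) : V := ⟨x n, hxV n⟩
  have hfin : (⋃ n, ((b.coord (x' n)).support : Set V)).Finite :=
    U.finite_iUnion_of_finite_biUnion (fun n => Finset.finite_toSet _) fun T hT =>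
      (b.coord ⟨c T, hcV T hT⟩).support.finite_toSet.subset <| iUnion₂_subset fun n hn =>
        Finset.coe_subset.2 (b.support_coord_subset (hc_mem T n hn))
  have hxe (n : ℕ) : x n * b.unit hfin.toFinset = x n :=
    b.mul_unit (x := x' n) fun α hα => hfin.mem_toFinset.2 (mem_iUnion.2 ⟨n, hα⟩)
  obtain ⟨T, hT, heT⟩ := exists_notMem_mul_eq_self hc_mul (b.unit_mem hfin.toFinset)
  obtain ⟨n, hn⟩ := U.nonempty_of_mem (U.compl_mem_iff_notMem.2 hT)
  refine ⟨n, ?_⟩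
  calc x n = x n * b.unit hfin.toFinset * c T := by rw [mul_assoc, heT, hxe]
    _ = 0 := by rw [hxe, hc_notMem T n hn]

theorem not_iSupIndep_span_singleton [Module.Injective R R]
    (hproj : ∀ I : Ideal R, Module.Projective R I) {x : ℕ → R} (hx : ∀ n, x n ≠ 0) :
    ¬iSupIndep fun n => R ∙ x n := by
  intro hind
  obtain ⟨B, hB, hess⟩ := exists_disjoint_isEssential_sup (⨆ n, R ∙ x n)
  choose c hc_mem hc_notMem hc_B using exists_mul_eq_indicator hind hB
  have hc_mul (T T' : Set ℕ) (hTT' : T ⊆ T') : c T * c T' = c T := by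
    rw [← sub_eq_zero]
    have := hproj (R ∙ (c T * c T' - c T))
    refine eq_zero_of_isEssential_ker_toSpanSingleton (hess.mono (sup_le (iSup_le fun n => ?_)
      fun y hy => ?_))
    · rw [span_singleton_le_iff_mem, LinearMap.mem_ker, LinearMap.toSpanSingleton_apply,
        smul_eq_mul, mul_sub, ← mul_assoc]
      by_cases hn : n ∈ T
      · rw [hc_mem T n hn, hc_mem T' n (hTT' hn), sub_self]
      · rw [hc_notMem T n hn, zero_mul, sub_self]
    · simp [mul_sub, ← mul_assoc, hc_B _ y hy]
  have := hproj (span R (c '' {T | T ∉ hyperfilter ℕ}))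
  obtain ⟨n, hn⟩ := exists_eq_zero_of_mul_eq_indicator hc_mem hc_notMem hc_mul
  exact hx n hn

theorem exists_seq_notMem_span {M : Type*} [AddCommGroup M] [Module R M] {N : Submodule R M}
    (hN : ¬N.FG) : ∃ y : ℕ → M, ∀ n, y n ∈ N ∧ y n ∉ span R (y '' Iio n) := by
  have step (K : {K : Submodule R M // K.FG ∧ K ≤ N}) : ∃ y ∈ N, y ∉ K.1 := by
    by_contra! h
    exact hN (le_antisymm K.2.2 h ▸ K.2.1)
  choose next hnext_mem hnext_notMem using step
  let K (n : ℕ) : {K : Submodule R M // K.FG ∧ K ≤ N} := Nat.rec ⟨⊥, fg_bot, bot_le⟩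
    (fun _ K => ⟨K.1 ⊔ R ∙ next K, K.2.1.sup (fg_span_singleton _),
      sup_le K.2.2 (span_singleton_le_iff_mem _ _ |>.2 (hnext_mem K))⟩) n
  have hK : Monotone fun n => (K n).1 := monotone_nat_of_le_succ fun n => le_sup_left
  refine ⟨fun n => next (K n), fun n => ⟨hnext_mem _, fun h => hnext_notMem (K n) ?_⟩⟩
  refine span_le.2 ?_ h
  rintro _ ⟨k, hk, rfl⟩
  exact hK (Nat.succ_le_of_lt hk) (mem_sup_right (mem_span_singleton_self _))

theorem exists_iSupIndep_span_singleton
    (hfg : ∀ K : Ideal R, K.FG → ∃ e ∈ K, ∀ z ∈ K, z * e = z) {I : Ideal R} (hI : ¬I.FG) :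
    ∃ x : ℕ → R, (∀ n, x n ≠ 0) ∧ iSupIndep fun n => R ∙ x n := by
  obtain ⟨y, hy⟩ := exists_seq_notMem_span hI
  let K (n : ℕ) : Ideal R := span R (y '' Iio n)
  choose e he_mem he using fun n => hfg (K n) (fg_span ((finite_Iio n).image y))
  refine ⟨fun n => y n - y n * e n, fun n h => (hy n).2 ?_,
    iSupIndep_of_disjoint_biSup_lt fun n => ?_⟩
  · rw [sub_eq_zero.1 h]
    exact (K n).mul_mem_left _ (he_mem n)
  · have hle : ⨆ k < n, R ∙ (y k - y k * e k) ≤ K n := iSup₂_le fun k hk =>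
      (span_singleton_le_iff_mem _ _).2 <| sub_mem (subset_span ⟨k, hk, rfl⟩) <|
        (K n).mul_mem_left _ (span_mono (image_mono (Iio_subset_Iio hk.le)) (he_mem k))
    refine Disjoint.mono_right hle (disjoint_def.2 fun z hz hzK => ?_)
    obtain ⟨r, rfl⟩ := mem_span_singleton.1 hz
    rw [← he n _ hzK, smul_eq_mul, mul_assoc, sub_mul, mul_assoc, he n _ (he_mem n), sub_self,
      mul_zero]

theorem isSemisimpleRing_of_forall_exists_mul_eq_self
    (h : ∀ I : Ideal R, ∃ e ∈ I, ∀ x ∈ I, x * e = x) : IsSemisimpleRing R := by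
  refine { toComplementedLattice := ⟨fun I => ?_⟩ }
  obtain ⟨e, heI, he⟩ := h I
  refine ⟨R ∙ (1 - e), disjoint_def.2 fun x hxI hx => ?_,
    codisjoint_iff.2 (eq_top_iff.2 fun x _ => ?_)⟩
  · obtain ⟨r, rfl⟩ := mem_span_singleton.1 hx
    rw [← he _ hxI, smul_eq_mul, mul_assoc, sub_mul, one_mul, he e heI, sub_self, mul_zero]
  · rw [show x = x * e + x * (1 - e) by noncomm_ring]
    exact add_mem_sup (I.smul_mem x heI) (mem_span_singleton.2 ⟨x, smul_eq_mul x _⟩)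

theorem isSemisimpleRing_of_projective_of_injective [Module.Injective R R]
    (hproj : ∀ I : Ideal R, Module.Projective R I) : IsSemisimpleRing R := by
  have hfg (K : Ideal R) (hK : K.FG) : ∃ e ∈ K, ∀ z ∈ K, z * e = z :=
    have := hproj K
    hK.exists_mem_forall_mul_eq_self
  refine isSemisimpleRing_of_forall_exists_mul_eq_self fun I => hfg I ?_
  by_contra hI
  obtain ⟨x, hx, hind⟩ := exists_iSupIndep_span_singleton hfg hI
  exact not_iSupIndep_span_singleton hproj hx hind

end Ring

theorem stmt_2 (R : Type*) [Ring R] :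
    IsSemisimpleRing R ↔
      ((∀ I : Ideal R, Module.Projective R I) ∧ Module.Injective R R) := by
  refine ⟨fun _ => ⟨fun I => Module.projective_of_isSemisimpleRing R I,
    Module.injective_of_isSemisimpleRing R R⟩, fun ⟨hproj, _⟩ => ?_⟩
  exact isSemisimpleRing_of_projective_of_injective hproj
end

section
/- Let R be a von Neumann regular *-ring in which every idempotent generates the same right ideal as some projection; then the involution of R is proper, i.e. x* x = 0 implies x = 0 (so R is *-regular). -/
theorem stmt_3 (R : Type*) [Ring R] [StarRing R]
    (hreg : ∀ a : R, ∃ b : R, a * b * a = a)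
    (hproj : ∀ e : R, e * e = e → ∃ p : R, p * p = p ∧ star p = p ∧
      {y : R | ∃ r : R, y = e * r} = {y : R | ∃ r : R, y = p * r}) :
    ∀ x : R, star x * x = 0 → x = 0 := by
  intro x hx
  obtain ⟨b, hb⟩ := hreg x
  have he : (x * b) * (x * b) = x * b := by
    calc (x * b) * (x * b) = (x * b * x) * b := by noncomm_ring
    _ = x * b := by rw [hb]
  obtain ⟨p, hpp, hps, hset⟩ := hproj (x * b) he
  -- p ∈ pR = eR, so p = x * t for some t
  have hpmem : p ∈ {y : R | ∃ r : R, y = x * b * r} := by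
    rw [hset]; exact ⟨p, hpp.symm⟩
  obtain ⟨r, hr⟩ := hpmem
  have hpx : p = x * (b * r) := by rw [hr, mul_assoc]
  -- x ∈ eR = pR, so x = p * s, hence p * x = x
  have hxmem : x ∈ {y : R | ∃ r : R, y = p * r} := by
    rw [← hset]; exact ⟨x, hb.symm⟩
  obtain ⟨s, hs⟩ := hxmem
  have hpzero : p = 0 := by
    calc p = star p * p := by rw [hps, hpp]
    _ = star (b * r) * (star x * x) * (b * r) := by
        rw [hpx, star_mul]; noncomm_ring
    _ = 0 := by rw [hx, mul_zero, zero_mul]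
  rw [hs, hpzero, zero_mul]
end

section
/- In a *-ring in which 1 + x* x is invertible for every x, every idempotent e satisfies e R = p R for some projection p. -/
theorem stmt_4 (R : Type*) [Ring R] [StarRing R]
    (hsym : ∀ x : R, IsUnit (1 + star x * x)) :
    ∀ e : R, e * e = e → ∃ p : R, p * p = p ∧ star p = p ∧
      {y : R | ∃ r : R, y = e * r} = {y : R | ∃ r : R, y = p * r} := by
  intro e he
  have he' : star e * star e = star e := by rw [← star_mul, he]
  set u : R := 1 + star (star e - e) * (star e - e) with hu_def
  obtain ⟨U, hU⟩ := hsym (star e - e)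
  have hu_star : star u = u := by
    simp only [hu_def, star_add, star_one, star_mul, star_star, star_sub]
  -- key identities
  have h1 : u * e = e * star e * e := by
    simp only [hu_def, star_sub, star_star, add_mul, one_mul, sub_mul, mul_sub,
      mul_assoc, he]
    rw [← mul_assoc (star e) (star e) e, he']
    noncomm_ring
  have h2 : star e * u = star e * e * star e := by
    have := congrArg star h1
    simpa [star_mul, hu_star, mul_assoc] using this
  -- u commutes with e * star e
  have hcomm : u * (e * star e) = e * star e * u := by
    calc u * (e * star e) = (u * e) * star e := by rw [mul_assoc]
    _ = e * star e * e * star e := by rw [h1]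
    _ = e * (star e * u) := by rw [h2]; noncomm_ring
    _ = e * star e * u := by rw [mul_assoc]
  set v : R := ↑U⁻¹ with hv_def
  have hU' : (U : R) = u := by rw [hU, hu_def]
  have huv : u * v = 1 := by rw [← hU', hv_def]; exact U.mul_inv
  have hvu : v * u = 1 := by rw [← hU', hv_def]; exact U.inv_mul
  have hv_star : star v = v := by
    have h : star v * u = 1 := by
      rw [← hu_star, ← star_mul, huv, star_one]
    calc star v = star v * (u * v) := by rw [huv, mul_one]
    _ = (star v * u) * v := by rw [mul_assoc]
    _ = v := by rw [h, one_mul]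
  have hvcomm : v * (e * star e) = e * star e * v := by
    calc v * (e * star e) = v * (e * star e) * (u * v) := by rw [huv, mul_one]
    _ = v * ((e * star e) * u) * v := by noncomm_ring
    _ = v * (u * (e * star e)) * v := by rw [hcomm]
    _ = (v * u) * ((e * star e) * v) := by noncomm_ring
    _ = e * star e * v := by rw [hvu, one_mul]
  refine ⟨e * star e * v, ?_, ?_, ?_⟩
  · -- idempotent
    calc e * star e * v * (e * star e * v)
        = (e * star e) * (v * (e * star e)) * v := by noncomm_ring
    _ = (e * star e) * (e * star e * v) * v := by rw [hvcomm]
    _ = (e * star e * e) * star e * (v * v) := by noncomm_ring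
    _ = (u * e) * star e * (v * v) := by rw [h1]
    _ = u * (e * star e * v) * v := by noncomm_ring
    _ = (e * star e) * u * v * v := by rw [← hcomm]; noncomm_ring
    _ = (e * star e) * (u * v) * v := by noncomm_ring
    _ = e * star e * v := by rw [huv, mul_one]
  · -- self-adjoint
    calc star (e * star e * v) = star v * (e * star e) := by
          simp [star_mul, star_star, mul_assoc]
    _ = v * (e * star e) := by rw [hv_star]
    _ = e * star e * v := hvcomm
  · -- same right ideal
    have hpe : e * star e * v * e = e := by
      calc e * star e * v * e = (e * star e * v) * e := rfl
      _ = v * (e * star e) * e := by rw [hvcomm]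
      _ = v * (e * star e * e) := by noncomm_ring
      _ = v * (u * e) := by rw [h1]
      _ = (v * u) * e := by rw [mul_assoc]
      _ = e := by rw [hvu, one_mul]
    ext y
    simp only [Set.mem_setOf_eq]
    constructor
    · rintro ⟨r, rfl⟩
      exact ⟨e * r, by rw [← mul_assoc, hpe]⟩
    · rintro ⟨r, rfl⟩
      exact ⟨star e * v * r, by noncomm_ring⟩
end

section
/- In a *-ring, given a partial isometry p with p* p = v a self-adjoint idempotent, p = v p = p v, together with an element e with e = v e, e* p = 0 and e* e ≠ 0, the element x = p + 1 - v satisfies x* x = 1 but x x* ≠ 1; hence the ring is not finite. -/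
theorem stmt_9 (R : Type*) [Ring R] [StarRing R] (v p e : R)
    (hv : v * v = v) (hvs : star v = v)
    (hpp : star p * p = v) (hvp : v * p = p) (hpv : p * v = p)
    (hve : v * e = e) (hep : star e * p = 0) (hee : star e * e ≠ 0) :
    star (p + 1 - v) * (p + 1 - v) = 1 ∧ (p + 1 - v) * star (p + 1 - v) ≠ 1 := by
  have hpsv : star p * v = star p := by
    have := congrArg star hvp
    simpa [star_mul, hvs] using this
  have hev : star e * v = star e := by
    have := congrArg star hve
    simpa [star_mul, hvs] using this
  constructor
  · have expand : (star p + 1 - v) * (p + 1 - v)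
        = (star p * p) + star p + p + 1 - v - (v * p) - (star p * v) - v + (v * v) := by
      noncomm_ring
    simp only [star_sub, star_add, star_one, hvs]
    rw [expand, hpp, hvp, hpsv, hv]
    abel
  · intro h
    have hex : star e * (p + 1 - v) = 0 := by
      rw [mul_sub, mul_add, hep, hev, mul_one]; abel
    apply hee
    calc star e * e = star e * ((p + 1 - v) * star (p + 1 - v)) * e := by
          rw [h, mul_one]
      _ = (star e * (p + 1 - v)) * (star (p + 1 - v) * e) := by noncomm_ring
      _ = 0 := by rw [hex, zero_mul]
end

section
/- In a *-ring, given p, e with p* p = v a self-adjoint idempotent, v p = p, v e = e, e* p = 0, and e (e* e) = e, the elements fₙ = pⁿ e e* (p*)ⁿ (n ≥ 1) form a family of pairwise orthogonal idempotents; moreover if e* (p*)ᵐ ≠ 0 for all m ≥ 1, then the fₙ are pairwise distinct, giving an infinite set of nonzero pairwise orthogonal idempotents. -/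
theorem stmt_10 (R : Type*) [Ring R] [StarRing R] (v p e : R)
    (hv : v * v = v) (hvs : star v = v)
    (hpp : star p * p = v) (hvp : v * p = p)
    (hve : v * e = e) (hep : star e * p = 0) (he : e * (star e * e) = e) :
    (∀ n : ℕ, 1 ≤ n →
        (p ^ n * (e * star e) * (star p) ^ n) * (p ^ n * (e * star e) * (star p) ^ n)
          = p ^ n * (e * star e) * (star p) ^ n) ∧
    (∀ n m : ℕ, 1 ≤ n → 1 ≤ m → n ≠ m →
        (p ^ n * (e * star e) * (star p) ^ n) * (p ^ m * (e * star e) * (star p) ^ m) = 0) ∧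
    ((∀ m : ℕ, 1 ≤ m → star e * (star p) ^ m ≠ 0) →
      ∀ n m : ℕ, 1 ≤ n → 1 ≤ m → n ≠ m →
        p ^ n * (e * star e) * (star p) ^ n ≠ p ^ m * (e * star e) * (star p) ^ m) := by
  -- basic auxiliary facts
  have hvp' : ∀ n : ℕ, v * p ^ (n + 1) = p ^ (n + 1) := by
    intro n
    rw [pow_succ', ← mul_assoc, hvp]
  have h2 : ∀ n : ℕ, (star p) ^ (n + 1) * p ^ (n + 1) = v := by
    intro n
    induction n with
    | zero => simpa using hpp
    | succ k ih =>
      rw [pow_succ (star p), pow_succ' p, mul_assoc, ← mul_assoc (star p), hpp, hvp' k]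
      exact ih
  have h2' : ∀ (n : ℕ) (x : R), (star p) ^ (n + 1) * (p ^ (n + 1) * x) = v * x := by
    intro n x; rw [← mul_assoc, h2]
  have hvp'' : ∀ (n : ℕ) (x : R), v * (p ^ (n + 1) * x) = p ^ (n + 1) * x := by
    intro n x; rw [← mul_assoc, hvp']
  have hev : star e * v = star e := by
    rw [← hvs, ← star_mul, hve]
  have hev' : ∀ x : R, star e * (v * x) = star e * x := by
    intro x; rw [← mul_assoc, hev]
  have heee : e * star e * e = e := by rw [mul_assoc, he]
  have he' : ∀ x : R, e * (star e * (e * x)) = e * x := by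
    intro x; rw [← mul_assoc, ← mul_assoc, heee]
  have hepow : ∀ k : ℕ, star e * p ^ (k + 1) = 0 := by
    intro k; rw [pow_succ', ← mul_assoc, hep, zero_mul]
  have hsee : star e * (e * star e) = star e := by
    have h := congrArg star he
    simpa [star_mul, star_star, mul_assoc] using h
  have hseese : ∀ x : R, star e * (e * (star e * x)) = star e * x := by
    intro x
    calc star e * (e * (star e * x)) = (star e * (e * star e)) * x := by
          rw [mul_assoc, mul_assoc]
      _ = star e * x := by rw [hsee]
  -- idempotent
  have idem : ∀ n : ℕ, 1 ≤ n →
      (p ^ n * (e * star e) * (star p) ^ n) * (p ^ n * (e * star e) * (star p) ^ n)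
        = p ^ n * (e * star e) * (star p) ^ n := by
    intro n hn
    obtain ⟨k, rfl⟩ : ∃ k, n = k + 1 := ⟨n - 1, by omega⟩
    simp only [mul_assoc]
    rw [h2' k, hev', he']
  -- self-adjointness of the f's
  have hsa : ∀ j : ℕ, star (p ^ j * (e * star e) * (star p) ^ j)
      = p ^ j * (e * star e) * (star p) ^ j := by
    intro j
    simp [star_mul, star_star, star_pow, mul_assoc]
  -- orthogonality in the case n < m
  have orthlt : ∀ a b : ℕ,
      (p ^ (a+1) * (e * star e) * (star p) ^ (a+1))
        * (p ^ (a+1+(b+1)) * (e * star e) * (star p) ^ (a+1+(b+1))) = 0 := by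
    intro a b
    rw [show p ^ (a+1+(b+1)) = p ^ (a+1) * p ^ (b+1) from pow_add p (a+1) (b+1)]
    simp only [mul_assoc]
    rw [h2' a, hvp'' b]
    rw [show star e * (p ^ (b+1) * (e * (star e * (star p) ^ (a+1+(b+1))))) = 0 from by
      rw [← mul_assoc, hepow, zero_mul]]
    simp
  -- general orthogonality
  have orth : ∀ n m : ℕ, 1 ≤ n → 1 ≤ m → n ≠ m →
      (p ^ n * (e * star e) * (star p) ^ n) * (p ^ m * (e * star e) * (star p) ^ m) = 0 := by
    intro n m hn hm hnm
    rcases Nat.lt_or_ge n m with h | h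
    · obtain ⟨a, rfl⟩ : ∃ a, n = a + 1 := ⟨n - 1, by omega⟩
      obtain ⟨b, rfl⟩ : ∃ b, m = a + 1 + (b + 1) := ⟨m - (a+1) - 1, by omega⟩
      exact orthlt a b
    · have hlt : m < n := lt_of_le_of_ne h (Ne.symm hnm)
      obtain ⟨a, rfl⟩ : ∃ a, m = a + 1 := ⟨m - 1, by omega⟩
      obtain ⟨b, rfl⟩ : ∃ b, n = a + 1 + (b + 1) := ⟨n - (a+1) - 1, by omega⟩
      have key := orthlt a b
      calc (p ^ (a+1+(b+1)) * (e * star e) * (star p) ^ (a+1+(b+1)))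
            * (p ^ (a+1) * (e * star e) * (star p) ^ (a+1))
          = star ((p ^ (a+1) * (e * star e) * (star p) ^ (a+1))
              * (p ^ (a+1+(b+1)) * (e * star e) * (star p) ^ (a+1+(b+1)))) := by
            rw [star_mul, hsa, hsa]
        _ = 0 := by rw [key, star_zero]
  refine ⟨idem, orth, ?_⟩
  intro hne n m hn hm hnm heq
  have hfn0 : p ^ n * (e * star e) * (star p) ^ n = 0 := by
    calc p ^ n * (e * star e) * (star p) ^ n
        = (p ^ n * (e * star e) * (star p) ^ n) * (p ^ n * (e * star e) * (star p) ^ n) :=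
          (idem n hn).symm
      _ = (p ^ n * (e * star e) * (star p) ^ n) * (p ^ m * (e * star e) * (star p) ^ m) := by
          rw [← heq]
      _ = 0 := orth n m hn hm hnm
  obtain ⟨k, rfl⟩ : ∃ k, n = k + 1 := ⟨n - 1, by omega⟩
  apply hne (k + 1) (by omega)
  have h0 : star e * ((star p) ^ (k+1) * (p ^ (k+1) * (e * star e) * (star p) ^ (k+1))) = 0 := by
    rw [hfn0, mul_zero, mul_zero]
  calc star e * (star p) ^ (k + 1)
      = star e * ((star p) ^ (k+1) * (p ^ (k+1) * (e * star e) * (star p) ^ (k+1))) := by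
        simp only [mul_assoc]
        rw [h2' k, hev', hseese]
    _ = 0 := h0
end

section
/- If R is a *-subring of a *-ring Q such that for every finite list q₁,…,qₙ ∈ Q and every nonzero d ∈ Q there is r ∈ R with r qᵢ ∈ R for all i and r d ≠ 0, and the involution on R is positive definite, then the involution on Q is positive definite. -/
theorem stmt_12 (Q : Type*) [Ring Q] [StarRing Q] (R : Subring Q)
    (hstar : ∀ r ∈ R, star r ∈ R)
    (hdense : ∀ (n : ℕ) (q : Fin n → Q) (d : Q), d ≠ 0 →
      ∃ r ∈ R, (∀ i, r * q i ∈ R) ∧ r * d ≠ 0)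
    (hpd : ∀ (n : ℕ) (s : Fin n → Q), (∀ i, s i ∈ R) →
      (∑ i, star (s i) * s i) = 0 → ∀ i, s i = 0) :
    ∀ (n : ℕ) (q : Fin n → Q), (∑ i, star (q i) * q i) = 0 → ∀ i, q i = 0 := by
  intro n q hsum j
  by_contra hj
  have hsj : star (q j) ≠ 0 := fun h => hj (by simpa using congrArg star h)
  obtain ⟨r, hrR, hmul, hd⟩ := hdense n (fun i => star (q i)) (star (q j)) hsj
  have hmem : ∀ i, q i * star r ∈ R := by
    intro i
    have := hstar _ (hmul i)
    simpa [star_mul] using this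
  have hzero : (∑ i, star (q i * star r) * (q i * star r)) = 0 := by
    have : (∑ i, star (q i * star r) * (q i * star r))
        = r * (∑ i, star (q i) * q i) * star r := by
      rw [Finset.mul_sum, Finset.sum_mul]
      refine Finset.sum_congr rfl fun i _ => ?_
      simp [star_mul, mul_assoc]
    rw [this, hsum, mul_zero, zero_mul]
  have := hpd n (fun i => q i * star r) hmem hzero j
  apply hd
  have : star (q j * star r) = 0 := by simpa using congrArg star this
  simpa [star_mul] using this
end
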